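/- arXiv:2110.14453 — 3 statements merged into one kernel-verified Lean document; each statement's English description precedes it below -/
import Mathlib

section
/- For all integers m, n ≥ 3 with not both m = 4 and n = 4, the direct product of cycle graphs C_m × C_n has total chromatic number exactly 5 (i.e., C_m × C_n is Type 1, since it is 4-regular). -/
open SimpleGraph

/-- Tensor (direct / categorical) product of simple graphs:
`(u, v)` is adjacent to `(u', v')` iff `u ~ u'` in `G` and `v ~ v'` in `H`. -/
def tensorProd {V W : Type*} (G : SimpleGraph V) (H : SimpleGraph W) :
    SimpleGraph (V × W) where
  Adj x y := G.Adj x.1 y.1 ∧ H.Adj x.2 y.2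
  symm := ⟨fun _ _ h => ⟨h.1.symm, h.2.symm⟩⟩
  loopless := ⟨fun x h => G.loopless.irrefl x.1 h.1⟩

instance {V W : Type*} (G : SimpleGraph V) (H : SimpleGraph W)
    [DecidableRel G.Adj] [DecidableRel H.Adj] : DecidableRel (tensorProd G H).Adj :=
  fun x y => inferInstanceAs (Decidable (G.Adj x.1 y.1 ∧ H.Adj x.2 y.2))

/-- `G` has a proper total coloring with `k` colors: adjacent vertices get distinct
colors, distinct incident edges get distinct colors, and each edge gets a color
distinct from those of both of its endpoints. -/
def HasTotalColoring {V : Type*} (G : SimpleGraph V) (k : ℕ) : Prop :=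
  ∃ (cv : V → Fin k) (ce : Sym2 V → Fin k),
    (∀ u v, G.Adj u v → cv u ≠ cv v) ∧
    (∀ u v w, G.Adj u v → G.Adj u w → v ≠ w → ce s(u, v) ≠ ce s(u, w)) ∧
    (∀ u v, G.Adj u v → ce s(u, v) ≠ cv u ∧ ce s(u, v) ≠ cv v)

/-- The total chromatic number: the least `k` such that `G` has a `k`-total coloring. -/
noncomputable def totalChromaticNumber {V : Type*} (G : SimpleGraph V) : ℕ :=
  sInf {k | HasTotalColoring G k}

/-!
A vertex of the 4-regular graph `C_m × C_n` and its four edges need five distinct colors.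
Conversely, take colorings of `C_m × C_n` that depend only on the row: row `i` carries
a vertex color and the colors of its edges towards `x + (1, 1)` and `x + (1, -1)`. Which rows may
follow which is a digraph on triples of colors, and a closed walk of length `m` in it gives a
5-total coloring for every `n`. At one state there are closed walks of lengths 5, 6, 8 and 9,
hence of every length `m ≥ 5` except 7; there are none of lengths 3, 4 and 7 at all, so the cases
`m, n ∈ {3, 4, 7}` get explicit colorings.
-/

section TotalColoring

variable {V V' : Type*} {G : SimpleGraph V} {G' : SimpleGraph V'} {k : ℕ}

theorem HasTotalColoring.degree_add_one_le (h : HasTotalColoring G k) (u : V)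
    [Fintype (G.neighborSet u)] : G.degree u + 1 ≤ k := by
  obtain ⟨cv, ce, -, hce, hcv⟩ := h
  let f : Option (G.neighborSet u) → Fin k := fun
    | none => cv u
    | some v => ce s(u, v)
  have hf : Function.Injective f := by
    rintro (_ | ⟨v, hv⟩) (_ | ⟨w, hw⟩) hvw
    · rfl
    · exact absurd hvw.symm (hcv u w hw).1
    · exact absurd hvw (hcv u v hv).1
    · by_contra hne
      exact hce u v w hv hw (fun h => hne (by subst h; rfl)) hvw
  simpa only [Fintype.card_option, card_neighborSet_eq_degree, Fintype.card_fin] using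
    Fintype.card_le_of_injective f hf

theorem HasTotalColoring.of_iso (e : G ≃g G') (h : HasTotalColoring G k) :
    HasTotalColoring G' k := by
  obtain ⟨cv, ce, hcv, hce, hinc⟩ := h
  refine ⟨cv ∘ e.symm, ce ∘ Sym2.map e.symm, fun u v huv => ?_, fun u v w huv huw hvw => ?_,
    fun u v huv => ?_⟩ <;> simp only [Function.comp_apply, Sym2.map_mk]
  · exact hcv _ _ (e.symm.map_adj_iff.mpr huv)
  · exact hce _ _ _ (e.symm.map_adj_iff.mpr huv) (e.symm.map_adj_iff.mpr huw)
      (e.symm.injective.ne hvw)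
  · exact hinc _ _ (e.symm.map_adj_iff.mpr huv)

theorem totalChromaticNumber_eq_of_isRegularOfDegree [Nonempty V] [G.LocallyFinite] {d : ℕ}
    (hG : G.IsRegularOfDegree d) (h : HasTotalColoring G (d + 1)) :
    totalChromaticNumber G = d + 1 := by
  refine le_antisymm (Nat.sInf_le h) (le_csInf ⟨_, h⟩ fun k hk => ?_)
  simpa [hG.degree_eq] using hk.degree_add_one_le (Classical.arbitrary V)

end TotalColoring

section TensorProd

variable {V W : Type*} (G : SimpleGraph V) (H : SimpleGraph W)

def tensorProdComm : tensorProd G H ≃g tensorProd H G where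
  toEquiv := Equiv.prodComm V W
  map_rel_iff' := and_comm

variable {G H}

theorem neighborFinset_tensorProd [Fintype V] [Fintype W] [DecidableRel G.Adj]
    [DecidableRel H.Adj] (x : V × W) :
    (tensorProd G H).neighborFinset x = G.neighborFinset x.1 ×ˢ H.neighborFinset x.2 := by
  ext y
  simp only [mem_neighborFinset, Finset.mem_product]
  rfl

theorem SimpleGraph.IsRegularOfDegree.tensorProd [Fintype V] [Fintype W] [DecidableRel G.Adj]
    [DecidableRel H.Adj] {d e : ℕ} (hG : G.IsRegularOfDegree d) (hH : H.IsRegularOfDegree e) :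
    (tensorProd G H).IsRegularOfDegree (d * e) := fun x => by
  rw [← card_neighborFinset_eq_degree, neighborFinset_tensorProd, Finset.card_product,
    card_neighborFinset_eq_degree, card_neighborFinset_eq_degree, hG.degree_eq, hH.degree_eq]

end TensorProd

section Cycle

theorem cycleGraph_isRegularOfDegree_two {s : ℕ} (hs : 3 ≤ s) :
    (cycleGraph s).IsRegularOfDegree 2 := by
  obtain ⟨s, rfl⟩ := Nat.exists_eq_add_of_le' hs
  exact fun _ => cycleGraph_degree_three_le

variable {s : ℕ} [NeZero s]

theorem cycleGraph_adj_iff (hs : 2 ≤ s) {u v : Fin s} :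
    (cycleGraph s).Adj u v ↔ v = u - 1 ∨ v = u + 1 := by
  obtain ⟨s, rfl⟩ := Nat.exists_eq_add_of_le' hs
  rw [← mem_neighborSet, cycleGraph_neighborSet]
  rfl

theorem Fin.add_one_add_one_ne_self (hs : 3 ≤ s) (a : Fin s) : a + 1 + 1 ≠ a := by
  rw [add_assoc, Ne, add_eq_left, Fin.ext_iff, Fin.val_add, Fin.val_one', Fin.val_zero,
    Nat.mod_eq_of_lt (by omega : 1 < s), Nat.mod_eq_of_lt (by omega : 1 + 1 < s)]
  omega

theorem Fin.neg_one_ne_one (hs : 3 ≤ s) : (-1 : Fin s) ≠ 1 := fun h =>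
  Fin.add_one_add_one_ne_self hs (-1) (by rw [neg_add_cancel, zero_add, h])

end Cycle

section TensorCycle

theorem ne_add_one_add_one {m : ℕ} [NeZero m] {β : Type*} [Add β] (hm : 3 ≤ m)
    (x : Fin m × β) (a b : β) : x ≠ x + (1, a) + (1, b) := fun h =>
  Fin.add_one_add_one_ne_self hm x.1 (congrArg Prod.fst h).symm

variable {m n k : ℕ} [NeZero m] [NeZero n]

theorem tensorProd_cycleGraph_adj_iff (hm : 2 ≤ m) (hn : 2 ≤ n) {u v : Fin m × Fin n} :
    (tensorProd (cycleGraph m) (cycleGraph n)).Adj u v ↔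
      v = u + (1, 1) ∨ v = u + (1, -1) ∨ v = u - (1, 1) ∨ v = u - (1, -1) := by
  change (cycleGraph m).Adj _ _ ∧ (cycleGraph n).Adj _ _ ↔ _
  simp only [cycleGraph_adj_iff hm, cycleGraph_adj_iff hn, Prod.ext_iff, Prod.fst_add,
    Prod.snd_add, Prod.fst_sub, Prod.snd_sub, sub_neg_eq_add, ← sub_eq_add_neg]
  tauto

section EdgeColoring

variable [NeZero k] (ep em : Fin m × Fin n → Fin k)

/-- For `m ≥ 3` at most one of `B x y` and `B y x` is nonzero, so the sum only makes reading the
color off the lower endpoint symmetric. -/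
def tensorCycleEdgeColoring : Sym2 (Fin m × Fin n) → Fin k :=
  let B (x y : Fin m × Fin n) : Fin k :=
    if y = x + (1, 1) then ep x else if y = x + (1, -1) then em x else 0
  Sym2.lift ⟨fun x y => B x y + B y x, fun _ _ => add_comm _ _⟩

theorem tensorCycleEdgeColoring_add_one_one (hm : 3 ≤ m) (x : Fin m × Fin n) :
    tensorCycleEdgeColoring ep em s(x, x + (1, 1)) = ep x := by
  simp [tensorCycleEdgeColoring, ne_add_one_add_one hm]

theorem tensorCycleEdgeColoring_add_one_neg_one (hm : 3 ≤ m) (hn : 3 ≤ n) (x : Fin m × Fin n) :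
    tensorCycleEdgeColoring ep em s(x, x + (1, -1)) = em x := by
  have h : x + (1, -1) ≠ x + (1, 1) := fun h =>
    Fin.neg_one_ne_one hn (congrArg Prod.snd (add_left_cancel h))
  simp [tensorCycleEdgeColoring, ne_add_one_add_one hm, h]

theorem tensorCycleEdgeColoring_sub_one_one (hm : 3 ≤ m) (x : Fin m × Fin n) :
    tensorCycleEdgeColoring ep em s(x, x - (1, 1)) = ep (x - (1, 1)) := by
  rw [Sym2.eq_swap, ← tensorCycleEdgeColoring_add_one_one ep em hm, sub_add_cancel]

theorem tensorCycleEdgeColoring_sub_one_neg_one (hm : 3 ≤ m) (hn : 3 ≤ n) (x : Fin m × Fin n) :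
    tensorCycleEdgeColoring ep em s(x, x - (1, -1)) = em (x - (1, -1)) := by
  rw [Sym2.eq_swap, ← tensorCycleEdgeColoring_add_one_neg_one ep em hm hn, sub_add_cancel]

end EdgeColoring

theorem hasTotalColoring_tensorProd_cycleGraph [NeZero k] (hm : 3 ≤ m) (hn : 3 ≤ n)
    (cv ep em : Fin m × Fin n → Fin k)
    (hv : ∀ x, cv x ≠ cv (x + (1, 1)) ∧ cv x ≠ cv (x + (1, -1)))
    (he : ∀ x, [cv x, ep x, em x, ep (x - (1, 1)), em (x - (1, -1))].Nodup) :
    HasTotalColoring (tensorProd (cycleGraph m) (cycleGraph n)) k := by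
  have hadj (u v : Fin m × Fin n) :=
    (tensorProd_cycleGraph_adj_iff (u := u) (v := v) (by omega : 2 ≤ m) (by omega : 2 ≤ n)).mp
  have hce := And.intro (tensorCycleEdgeColoring_add_one_one ep em hm) <|
    And.intro (tensorCycleEdgeColoring_add_one_neg_one ep em hm hn) <|
    And.intro (tensorCycleEdgeColoring_sub_one_one ep em hm)
      (tensorCycleEdgeColoring_sub_one_neg_one ep em hm hn)
  simp only [List.nodup_cons, List.mem_cons, List.not_mem_nil, not_or, List.nodup_nil, and_true,
    or_false, not_false_eq_true] at he
  have hend u v (huv : (tensorProd (cycleGraph m) (cycleGraph n)).Adj u v) :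
      tensorCycleEdgeColoring ep em s(u, v) ≠ cv u := by
    obtain ⟨⟨h₁, h₂, h₃, h₄⟩, -⟩ := he u
    rcases hadj u v huv with rfl | rfl | rfl | rfl <;> simp only [hce] <;> symm <;> assumption
  refine ⟨cv, tensorCycleEdgeColoring ep em, fun u v huv => ?_, fun u v w huv huw hvw => ?_,
    fun u v huv => ⟨hend u v huv, Sym2.eq_swap (a := u) ▸ hend v u huv.symm⟩⟩
  · rcases hadj u v huv with rfl | rfl | rfl | rfl
    · exact (hv u).1
    · exact (hv u).2
    · exact fun h => (hv (u - (1, 1))).1 (by rw [sub_add_cancel]; exact h.symm)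
    · exact fun h => (hv (u - (1, -1))).2 (by rw [sub_add_cancel]; exact h.symm)
  · obtain ⟨-, ⟨h₁₂, h₁₃, h₁₄⟩, ⟨h₂₃, h₂₄⟩, h₃₄⟩ := he u
    rcases hadj u v huv with rfl | rfl | rfl | rfl <;>
      rcases hadj u w huw with rfl | rfl | rfl | rfl <;>
      simp only [hce] <;> first | exact absurd rfl hvw | assumption | exact Ne.symm ‹_›

end TensorCycle

section ClosedWalk

variable {α : Type*} (R : α → α → Prop) (a : α)

def closedWalkLengths : AddSubmonoid ℕ where
  carrier := {m | ∃ f : ℕ → α, f 0 = a ∧ f m = a ∧ ∀ i < m, R (f i) (f (i + 1))}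
  zero_mem' := ⟨fun _ => a, rfl, rfl, fun _ h => absurd h (Nat.not_lt_zero _)⟩
  add_mem' := by
    rintro m m' ⟨f, hf0, hfm, hf⟩ ⟨g, hg0, hgm, hg⟩
    refine ⟨fun i => if i ≤ m then f i else g (i - m), by simp [hf0], ?_, fun i hi => ?_⟩
    · dsimp only
      split_ifs with h
      · rwa [show m + m' = m by omega]
      · rwa [Nat.add_sub_cancel_left]
    · dsimp only
      rcases lt_or_ge i m with h | h
      · rw [if_pos h.le, if_pos (Nat.succ_le_of_lt h)]
        exact hf i h
      · rw [if_neg (by omega : ¬i + 1 ≤ m), show i + 1 - m = i - m + 1 by omega]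
        rcases h.eq_or_lt with rfl | h
        · rw [if_pos le_rfl, hfm, Nat.sub_self, ← hg0]
          exact hg 0 (by omega)
        · rw [if_neg (by omega)]
          exact hg _ (by omega)

variable {R a}

theorem exists_rel_add_one_of_mem_closedWalkLengths {m : ℕ} [NeZero m]
    (h : m ∈ closedWalkLengths R a) : ∃ s : Fin m → α, ∀ i, R (s i) (s (i + 1)) := by
  obtain ⟨f, hf0, hfm, hf⟩ := h
  obtain ⟨m, rfl⟩ := Nat.exists_eq_add_one_of_ne_zero (NeZero.ne m)
  refine ⟨fun i => f i, fun i => ?_⟩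
  have hi := hf i i.isLt
  change R (f i) (f ↑(i + 1))
  rw [Fin.val_add_one]
  split_ifs with hlast
  · subst hlast
    rwa [hf0, ← hfm]
  · exact hi

end ClosedWalk

theorem AddSubmonoid.mem_of_five_le_of_ne_seven (S : AddSubmonoid ℕ) (h5 : 5 ∈ S) (h6 : 6 ∈ S)
    (h8 : 8 ∈ S) (h9 : 9 ∈ S) {m : ℕ} (hm : 5 ≤ m) (hm7 : m ≠ 7) : m ∈ S := by
  induction m using Nat.strong_induction_on with
  | _ m ih =>
    by_cases hm9 : m ≤ 9
    · interval_cases m <;> first | assumption | omega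
    by_cases hm12 : m = 12
    · exact hm12 ▸ S.add_mem h6 h6
    rw [show m = m - 5 + 5 by omega]
    exact S.add_mem (ih _ (by omega) (by omega) (by omega)) h5

/-- A triple `(c, p, q)` describes a row of a coloring of `C_m × C_n` that depends only on the
row: the color of its vertices and of their edges towards `x + (1, 1)` and `x + (1, -1)`. -/
def RowStep {k : ℕ} (s t : Fin k × Fin k × Fin k) : Prop :=
  s.1 ≠ t.1 ∧ [t.1, t.2.1, t.2.2, s.2.1, s.2.2].Nodup

instance {k : ℕ} : DecidableRel (@RowStep k) := fun _ _ => inferInstanceAs (Decidable (_ ∧ _))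

theorem hasTotalColoring_tensorProd_cycleGraph_of_rowStep {m n k : ℕ} [NeZero m] [NeZero n]
    [NeZero k] (hm : 3 ≤ m) (hn : 3 ≤ n) (s : Fin m → Fin k × Fin k × Fin k)
    (hs : ∀ i, RowStep (s i) (s (i + 1))) :
    HasTotalColoring (tensorProd (cycleGraph m) (cycleGraph n)) k :=
  hasTotalColoring_tensorProd_cycleGraph hm hn (fun x => (s x.1).1) (fun x => (s x.1).2.1)
    (fun x => (s x.1).2.2) (fun x => ⟨(hs x.1).1, (hs x.1).1⟩)
    fun x => sub_add_cancel x.1 1 ▸ (hs (x.1 - 1)).2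

theorem mem_closedWalkLengths_rowStep {m : ℕ} (hm : 5 ≤ m) (hm7 : m ≠ 7) :
    m ∈ closedWalkLengths (@RowStep 5) (0, 2, 4) := by
  refine AddSubmonoid.mem_of_five_le_of_ne_seven _ ?_ ?_ ?_ ?_ hm hm7
  · exact ⟨fun i => [(0, 2, 4), (1, 0, 3), (2, 1, 4), (3, 0, 2), (4, 1, 3)].getD i (0, 2, 4),
      rfl, rfl, by decide⟩
  · exact ⟨fun i => [(0, 2, 4), (1, 0, 3), (2, 1, 4), (0, 2, 3), (1, 0, 4), (2, 1, 3)].getD i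
      (0, 2, 4), rfl, rfl, by decide⟩
  · exact ⟨fun i => [(0, 2, 4), (1, 0, 3), (2, 1, 4), (0, 2, 3), (4, 0, 1), (2, 3, 4), (1, 0, 2),
      (4, 1, 3)].getD i (0, 2, 4), rfl, rfl, by decide⟩
  · exact ⟨fun i => [(0, 2, 4), (1, 0, 3), (2, 1, 4), (0, 2, 3), (1, 0, 4), (3, 1, 2), (0, 3, 4),
      (1, 0, 2), (4, 1, 3)].getD i (0, 2, 4), rfl, rfl, by decide⟩

theorem hasTotalColoring_tensorProd_cycleGraph_of_five_le {m n : ℕ} (hm : 5 ≤ m) (hm7 : m ≠ 7)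
    (hn : 3 ≤ n) : HasTotalColoring (tensorProd (cycleGraph m) (cycleGraph n)) 5 := by
  have : NeZero m := ⟨by omega⟩
  have : NeZero n := ⟨by omega⟩
  obtain ⟨s, hs⟩ :=
    exists_rel_add_one_of_mem_closedWalkLengths (mem_closedWalkLengths_rowStep hm hm7)
  exact hasTotalColoring_tensorProd_cycleGraph_of_rowStep (by omega) hn s hs

theorem hasTotalColoring_tensorProd_cycleGraph_three_three :
    HasTotalColoring (tensorProd (cycleGraph 3) (cycleGraph 3)) 5 :=
  hasTotalColoring_tensorProd_cycleGraph (by norm_num) (by norm_num)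
    (Function.uncurry ![![1, 1, 1], ![3, 0, 2], ![4, 4, 4]])
    (Function.uncurry ![![3, 0, 2], ![0, 2, 3], ![2, 3, 0]])
    (Function.uncurry ![![4, 4, 4], ![1, 1, 1], ![0, 2, 3]])
    (by decide) (by decide)

theorem hasTotalColoring_tensorProd_cycleGraph_three_four :
    HasTotalColoring (tensorProd (cycleGraph 3) (cycleGraph 4)) 5 :=
  hasTotalColoring_tensorProd_cycleGraph (by norm_num) (by norm_num)
    (Function.uncurry ![![2, 2, 2, 2], ![1, 3, 3, 1], ![0, 0, 0, 0]])
    (Function.uncurry ![![0, 1, 0, 4], ![3, 2, 4, 2], ![4, 1, 1, 1]])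
    (Function.uncurry ![![3, 0, 4, 0], ![2, 1, 2, 4], ![3, 4, 3, 3]])
    (by decide) (by decide)

theorem hasTotalColoring_tensorProd_cycleGraph_three_seven :
    HasTotalColoring (tensorProd (cycleGraph 3) (cycleGraph 7)) 5 :=
  hasTotalColoring_tensorProd_cycleGraph (by norm_num) (by norm_num)
    (Function.uncurry ![![3, 3, 3, 4, 2, 3, 3], ![1, 1, 0, 1, 1, 1, 2], ![0, 4, 0, 4, 2, 0, 0]])
    (Function.uncurry ![![2, 4, 4, 0, 4, 0, 4], ![2, 4, 1, 0, 4, 2, 4], ![2, 1, 3, 0, 4, 2, 4]])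
    (Function.uncurry ![![1, 0, 0, 2, 3, 2, 0], ![3, 3, 3, 2, 3, 3, 3], ![1, 0, 1, 2, 1, 1, 1]])
    (by decide) (by decide)

theorem hasTotalColoring_tensorProd_cycleGraph_four_seven :
    HasTotalColoring (tensorProd (cycleGraph 4) (cycleGraph 7)) 5 :=
  hasTotalColoring_tensorProd_cycleGraph (by norm_num) (by norm_num)
    (Function.uncurry ![![3, 0, 0, 1, 2, 2, 4], ![1, 2, 2, 3, 0, 0, 4], ![3, 0, 0, 1, 2, 2, 4],
      ![3, 2, 2, 1, 4, 0, 0]])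
    (Function.uncurry ![![0, 3, 2, 3, 4, 0, 0], ![2, 3, 4, 1, 1, 1, 1], ![0, 3, 2, 3, 4, 4, 0],
      ![2, 3, 4, 3, 1, 3, 1]])
    (Function.uncurry ![![2, 4, 1, 0, 0, 4, 2], ![3, 4, 1, 4, 2, 3, 3], ![2, 4, 1, 0, 0, 0, 2],
      ![1, 4, 1, 4, 2, 1, 3]])
    (by decide) (by decide)

theorem hasTotalColoring_tensorProd_cycleGraph_seven_seven :
    HasTotalColoring (tensorProd (cycleGraph 7) (cycleGraph 7)) 5 :=
  hasTotalColoring_tensorProd_cycleGraph (by norm_num) (by norm_num)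
    (Function.uncurry ![![2, 3, 0, 1, 1, 2, 2], ![4, 4, 4, 3, 3, 0, 1], ![3, 0, 1, 0, 1, 4, 2],
      ![3, 4, 4, 2, 2, 0, 2], ![1, 2, 3, 3, 1, 0, 4], ![0, 0, 0, 4, 2, 2, 3],
      ![4, 3, 2, 4, 0, 0, 4]])
    (Function.uncurry ![![1, 0, 1, 4, 4, 3, 0], ![3, 0, 1, 4, 0, 3, 0], ![1, 1, 4, 4, 3, 3, 0],
      ![1, 0, 2, 3, 3, 1, 0], ![3, 3, 2, 1, 4, 2, 3], ![1, 1, 1, 1, 3, 1, 0],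
      ![1, 4, 0, 3, 4, 4, 3]])
    (Function.uncurry ![![4, 2, 3, 3, 0, 1, 1], ![1, 2, 2, 2, 2, 2, 2], ![4, 4, 3, 3, 0, 1, 4],
      ![2, 2, 0, 1, 0, 2, 1], ![4, 4, 4, 4, 0, 4, 0], ![2, 2, 2, 3, 0, 3, 1],
      ![3, 0, 4, 2, 2, 2, 0]])
    (by decide) (by decide)

theorem hasTotalColoring_tensorProd_cycleGraph_five {m n : ℕ} (hm : 3 ≤ m) (hn : 3 ≤ n)
    (h : ¬(m = 4 ∧ n = 4)) : HasTotalColoring (tensorProd (cycleGraph m) (cycleGraph n)) 5 := by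
  have swap {m n : ℕ} (h : HasTotalColoring (tensorProd (cycleGraph m) (cycleGraph n)) 5) :
      HasTotalColoring (tensorProd (cycleGraph n) (cycleGraph m)) 5 :=
    h.of_iso (tensorProdComm _ _)
  by_cases hm' : 5 ≤ m ∧ m ≠ 7
  · exact hasTotalColoring_tensorProd_cycleGraph_of_five_le hm'.1 hm'.2 hn
  by_cases hn' : 5 ≤ n ∧ n ≠ 7
  · exact swap (hasTotalColoring_tensorProd_cycleGraph_of_five_le hn'.1 hn'.2 hm)
  obtain rfl | rfl | rfl : m = 3 ∨ m = 4 ∨ m = 7 := by omega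
  all_goals obtain rfl | rfl | rfl : n = 3 ∨ n = 4 ∨ n = 7 := by omega
  · exact hasTotalColoring_tensorProd_cycleGraph_three_three
  · exact hasTotalColoring_tensorProd_cycleGraph_three_four
  · exact hasTotalColoring_tensorProd_cycleGraph_three_seven
  · exact swap hasTotalColoring_tensorProd_cycleGraph_three_four
  · exact absurd ⟨rfl, rfl⟩ h
  · exact hasTotalColoring_tensorProd_cycleGraph_four_seven
  · exact swap hasTotalColoring_tensorProd_cycleGraph_three_seven
  · exact swap hasTotalColoring_tensorProd_cycleGraph_four_seven
  · exact hasTotalColoring_tensorProd_cycleGraph_seven_seven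

theorem cycle_tensor_cycle_type1 (m n : ℕ) (hm : 3 ≤ m) (hn : 3 ≤ n)
    (h : ¬(m = 4 ∧ n = 4)) :
    totalChromaticNumber (tensorProd (cycleGraph m) (cycleGraph n)) = 5 := by
  have : NeZero m := ⟨by omega⟩
  have : NeZero n := ⟨by omega⟩
  exact totalChromaticNumber_eq_of_isRegularOfDegree
    ((cycleGraph_isRegularOfDegree_two hm).tensorProd (cycleGraph_isRegularOfDegree_two hn))
    (hasTotalColoring_tensorProd_cycleGraph_five hm hn h)
end

section
/- The direct product of cycle graphs C_4 × C_4 has total chromatic number 6 (i.e., C_4 × C_4 is Type 2). -/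
open SimpleGraph

/-!
Upper bound: `C₄ × C₄` is bipartite, and pairing proper 2-edge-colourings of the two factors gives a
proper 4-edge-colouring of the product; two further colours for the vertices give a total
6-colouring.

Lower bound: `C₄ × C₄` contains `K₄,₄`, and `Kₙ,ₙ` has no total `(n + 1)`-colouring. Indeed, with
`n + 1` colours every colour is present at every vertex of degree `n`, so the colour of a left
vertex `a₀` occurs at each right vertex on an edge to a left vertex other than `a₀`. These edges are
pairwise non-incident, which injects the `n` right vertices into the `n - 1` left vertices
different from `a₀`.
-/

open Function Fintype

theorem Function.Injective.exists_apply_eq_of_card_eq_succ {α ι : Type*} [Fintype α] [Fintype ι]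
    {f : α → ι} (hf : Injective f)
    (hcard : card ι = card α + 1) {d : ι} (hd : ∀ a, f a ≠ d) {c : ι} (hc : c ≠ d) :
    ∃ a, f a = c := by
  classical
  let g : α → {x // x ≠ d} := fun a => ⟨f a, hd a⟩
  have hg : Bijective g := by
    rw [Fintype.bijective_iff_injective_and_card]
    refine ⟨fun a b h => hf (congrArg Subtype.val h), ?_⟩
    rw [card_subtype_compl, card_subtype_eq, hcard, Nat.add_sub_cancel]
  obtain ⟨a, ha⟩ := hg.2 ⟨c, hc⟩
  exact ⟨a, congrArg Subtype.val ha⟩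

namespace SimpleGraph

variable {V W ι κ : Type*}

def IsProperEdgeColoring (G : SimpleGraph V) (ce : Sym2 V → ι) : Prop :=
  ∀ u v w, G.Adj u v → G.Adj u w → v ≠ w → ce s(u, v) ≠ ce s(u, w)

theorem IsProperEdgeColoring.tensorProd {G : SimpleGraph V} {H : SimpleGraph W}
    {c : Sym2 V → ι} {d : Sym2 W → κ} (hc : G.IsProperEdgeColoring c)
    (hd : H.IsProperEdgeColoring d) :
    (_root_.tensorProd G H).IsProperEdgeColoring
      fun e => (c (e.map Prod.fst), d (e.map Prod.snd)) := by
  intro u v w huv huw hvw heq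
  simp only [Sym2.map_mk, Prod.mk.injEq] at heq
  exact hvw (Prod.ext (not_not.1 fun h => hc _ _ _ huv.1 huw.1 h heq.1)
    (not_not.1 fun h => hd _ _ _ huv.2 huw.2 h heq.2))

end SimpleGraph

open SimpleGraph

def tensorProd.fst {V W : Type*} (G : SimpleGraph V) (H : SimpleGraph W) : tensorProd G H →g G :=
  ⟨Prod.fst, fun h => h.1⟩

section TotalColoring

variable {V W : Type*} {G : SimpleGraph V} {k m : ℕ}

theorem HasTotalColoring.mono (h : HasTotalColoring G k) (hkm : k ≤ m) : HasTotalColoring G m := by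
  obtain ⟨cv, ce, hv, he, hve⟩ := h
  have hinj := Fin.castLE_injective hkm
  refine ⟨Fin.castLE hkm ∘ cv, Fin.castLE hkm ∘ ce, fun u v huv => hinj.ne (hv u v huv),
    fun u v w huv huw hvw => hinj.ne (he u v w huv huw hvw), fun u v huv => ?_⟩
  exact ⟨hinj.ne (hve u v huv).1, hinj.ne (hve u v huv).2⟩

theorem HasTotalColoring.of_copy {H : SimpleGraph W} (h : HasTotalColoring G k) (f : Copy H G) :
    HasTotalColoring H k := by
  obtain ⟨cv, ce, hv, he, hve⟩ := h
  refine ⟨cv ∘ f, ce ∘ Sym2.map f, fun u v huv => hv _ _ (f.toHom.map_adj huv),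
    fun u v w huv huw hvw => ?_, fun u v huv => hve _ _ (f.toHom.map_adj huv)⟩
  exact he _ _ _ (f.toHom.map_adj huv) (f.toHom.map_adj huw) (f.injective.ne hvw)

theorem totalChromaticNumber_eq_succ_iff (k : ℕ) :
    totalChromaticNumber G = k + 1 ↔ HasTotalColoring G (k + 1) ∧ ¬HasTotalColoring G k :=
  Nat.sInf_upward_closed_eq_succ_iff (fun _ _ hkm h => HasTotalColoring.mono h hkm) k

theorem hasTotalColoring_of_isProperEdgeColoring {ι κ : Type*} [Fintype ι] [Fintype κ]
    (C : G.Coloring κ) {ce : Sym2 V → ι} (hce : G.IsProperEdgeColoring ce) :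
    HasTotalColoring G (card ι + card κ) := by
  refine ⟨fun v => Fin.natAdd _ (equivFin κ (C v)), fun e => Fin.castAdd _ (equivFin ι (ce e)),
    fun u v huv => ?_, fun u v w huv huw hvw => ?_, fun u v huv => ?_⟩
  · exact (Fin.natAdd_injective _ _).ne ((equivFin κ).injective.ne (C.valid huv))
  · exact (Fin.castAdd_injective _ _).ne ((equivFin ι).injective.ne (hce u v w huv huw hvw))
  · constructor <;>
      exact Fin.ne_of_lt (by simp only [Fin.lt_def, Fin.val_castAdd, Fin.val_natAdd]; omega)

theorem completeBipartiteGraph_not_hasTotalColoring {α β : Type*} [Fintype α] [Fintype β]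
    [Nonempty α] (hαβ : card α ≤ card β) :
    ¬HasTotalColoring (completeBipartiteGraph α β) (card α + 1) := by
  rintro ⟨cv, ce, hv, he, hve⟩
  obtain ⟨a₀⟩ := ‹Nonempty α›
  have hcover : ∀ b, ∃ a, ce s(.inr b, .inl a) = cv (.inl a₀) := fun b =>
    Injective.exists_apply_eq_of_card_eq_succ
      (f := fun a => ce s(.inr b, .inl a))
      (fun a a' h => Sum.inl_injective (not_not.1 fun hne => he _ _ _ (by simp) (by simp) hne h))
      (by simp) (fun a => (hve _ _ (by simp)).1) (hv _ _ (by simp))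
  choose f hf using hcover
  have hf_ne : ∀ b, f b ≠ a₀ := fun b h => (hve (.inr b) (.inl (f b)) (by simp)).2 (h ▸ hf b)
  have hf' : ∀ b, ce s(.inl (f b), .inr b) = cv (.inl a₀) := fun b => Sym2.eq_swap ▸ hf b
  have hf_inj : Injective f := fun b b' h => Sum.inr_injective <| not_not.1 fun hne =>
    he (.inl (f b)) _ _ (by simp) (by simp) hne (by rw [hf', h, hf'])
  classical
  have hcard := Fintype.card_le_of_injective (fun b => (⟨f b, hf_ne b⟩ : {a // a ≠ a₀}))
    fun b b' h => hf_inj (congrArg Subtype.val h)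
  rw [card_subtype_compl, card_subtype_eq] at hcard
  have hpos := card_pos (α := α)
  omega

end TotalColoring

-- The edges `{0, 1}` and `{2, 3}` of `C₄` are exactly those with `i + j = 1` in `Fin 4`.
theorem cycleGraph_four_isProperEdgeColoring :
    (cycleGraph 4).IsProperEdgeColoring
      (Sym2.lift ⟨fun i j => decide (i + j = 1), by simp [add_comm]⟩) := by
  unfold IsProperEdgeColoring
  decide

def completeBipartiteCopy : Copy (completeBipartiteGraph (Fin 2 × Fin 2) (Fin 2 × Fin 2))
    (tensorProd (cycleGraph 4) (cycleGraph 4)) :=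
  Hom.toCopy
    { toFun := Sum.elim (fun p => (![0, 2] p.1, ![0, 2] p.2)) (fun p => (![1, 3] p.1, ![1, 3] p.2))
      map_rel' := by
        rintro (p | p) (q | q) h
        · simp at h
        · clear h; revert p q; decide
        · clear h; revert p q; decide
        · simp at h }
    (by decide)

theorem c4_tensor_c4_type2 :
    totalChromaticNumber (tensorProd (cycleGraph 4) (cycleGraph 4)) = 6 := by
  refine (totalChromaticNumber_eq_succ_iff 5).2 ⟨?_, fun h => ?_⟩
  · simpa using hasTotalColoring_of_isProperEdgeColoring
      ((cycleGraph.bicoloring_of_even 4 (by decide)).comp (tensorProd.fst _ _))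
      (cycleGraph_four_isProperEdgeColoring.tensorProd cycleGraph_four_isProperEdgeColoring)
  · exact completeBipartiteGraph_not_hasTotalColoring le_rfl (h.of_copy completeBipartiteCopy)
end

section
/- For every integer n ≥ 3, the direct product of cycle graphs C_6 × C_n has total chromatic number 5. -/
open SimpleGraph

/-!
Every vertex of `C₆ × Cₙ` has degree `4`, so at least `5` colours are needed. For the matching
upper bound, orient every edge of a graph `G` by a linear order on its vertices; an edge
`(a, b) ~ (c, d)` of `G × Cₙ` with `a < c` then either runs forwards (`d = b + 1`) or backwards
(`b = d + 1`) along the cycle. Each vertex `(a, b)` meets exactly one edge of each kind above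
every edge `a ~ c` of `G`, so the forward edges may be coloured by a total colouring of `G`
(whose vertex colours are reused) and the backward ones by a proper edge colouring of `G` with
fresh colours. For `G = C₆` this gives `3 + 2` colours.
-/

open Function

def HasEdgeColoring {V : Type*} (G : SimpleGraph V) (l : ℕ) : Prop :=
  ∃ ce : Sym2 V → Fin l, ∀ u v w, G.Adj u v → G.Adj u w → v ≠ w → ce s(u, v) ≠ ce s(u, w)

theorem totalChromaticNumber_eq {V : Type*} {G : SimpleGraph V} {k : ℕ}
    (h : HasTotalColoring G k) (hmin : ∀ j, HasTotalColoring G j → k ≤ j) :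
    totalChromaticNumber G = k :=
  le_antisymm (Nat.sInf_le h) (le_csInf ⟨k, h⟩ hmin)

theorem HasTotalColoring.degree_lt {V : Type*} {G : SimpleGraph V} {k : ℕ}
    (h : HasTotalColoring G k) (u : V) [Fintype (G.neighborSet u)] : G.degree u < k := by
  obtain ⟨cv, ce, -, hee, hev⟩ := h
  let c : Option (G.neighborSet u) → Fin k := fun w => w.elim (cv u) fun v => ce s(u, v)
  have hc : Injective c := by
    rintro (_ | ⟨v, hv⟩) (_ | ⟨w, hw⟩) h
    · rfl
    · exact ((hev u w hw).1 h.symm).elim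
    · exact ((hev u v hv).1 h).elim
    · by_contra hne
      exact hee u v w hv hw (fun hvw => hne (by subst hvw; rfl)) h
  have hcard := Fintype.card_le_of_injective c hc
  rw [Fintype.card_option, card_neighborSet_eq_degree, Fintype.card_fin] at hcard
  exact hcard

theorem tensorProd_degree {V W : Type*} [Fintype V] [Fintype W] (G : SimpleGraph V) (H : SimpleGraph W) [DecidableRel G.Adj] [DecidableRel H.Adj]
    (u : V) (v : W) :
    (tensorProd G H).degree (u, v) = G.degree u * H.degree v := by
  have : (tensorProd G H).neighborFinset (u, v) = G.neighborFinset u ×ˢ H.neighborFinset v := by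
    ext ⟨u', v'⟩
    rw [mem_neighborFinset, Finset.mem_product, mem_neighborFinset, mem_neighborFinset]
    rfl
  rw [← card_neighborFinset_eq_degree, this, Finset.card_product,
    card_neighborFinset_eq_degree, card_neighborFinset_eq_degree]

theorem eq_add_one_or_of_cycleGraph_adj {n : ℕ} [NeZero n] {b d : Fin n}
    (h : (cycleGraph n).Adj b d) : d = b + 1 ∨ b = d + 1 := by
  rcases n with _ | _ | n
  · exact b.elim0
  · exact (cycleGraph_one_adj h).elim
  · rw [cycleGraph_adj, sub_eq_iff_eq_add', sub_eq_iff_eq_add'] at h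
    exact h.symm

theorem Fin.castAdd_ne_natAdd {k l : ℕ} (a : Fin k) (b : Fin l) :
    Fin.castAdd l a ≠ Fin.natAdd k b :=
  Fin.ne_of_lt (by rw [Fin.lt_def, Fin.val_castAdd, Fin.val_natAdd]; omega)

section TensorCycle

variable {V : Type*} [LinearOrder V] {n k l : ℕ} [NeZero n]

def SameDirection (x y : V × Fin n) : Prop :=
  x.1 < y.1 ∧ y.2 = x.2 + 1 ∨ y.1 < x.1 ∧ x.2 = y.2 + 1

theorem sameDirection_comm {x y : V × Fin n} : SameDirection x y ↔ SameDirection y x := or_comm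

theorem eq_of_tensorProd_cycleGraph_adj {G : SimpleGraph V} {x y y' : V × Fin n}
    (hy : (tensorProd G (cycleGraph n)).Adj x y) (hy' : (tensorProd G (cycleGraph n)).Adj x y')
    (hfst : y.1 = y'.1) (hdir : SameDirection x y ↔ SameDirection x y') : y = y' := by
  obtain ⟨a, b⟩ := x
  obtain ⟨c, d⟩ := y
  obtain ⟨c', d'⟩ := y'
  obtain rfl : c = c' := hfst
  have hd := eq_add_one_or_of_cycleGraph_adj hy.2
  have hd' := eq_add_one_or_of_cycleGraph_adj hy'.2
  have hac := G.ne_of_adj hy.1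
  unfold SameDirection at hdir
  grind

open Classical in
noncomputable def tensorCycleEdgeColor (cA : Sym2 V → Fin k) (cB : Sym2 V → Fin l)
    (x y : V × Fin n) : Fin (k + l) :=
  if SameDirection x y then Fin.castAdd l (cA s(x.1, y.1)) else Fin.natAdd k (cB s(x.1, y.1))

theorem tensorCycleEdgeColor_comm (cA : Sym2 V → Fin k) (cB : Sym2 V → Fin l)
    (x y : V × Fin n) : tensorCycleEdgeColor cA cB x y = tensorCycleEdgeColor cA cB y x := by
  unfold tensorCycleEdgeColor
  rw [sameDirection_comm, Sym2.eq_swap]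

end TensorCycle

theorem HasTotalColoring.tensorProd_cycleGraph {V : Type*} {G : SimpleGraph V} {k l n : ℕ}
    [NeZero n] (hT : HasTotalColoring G k) (hE : HasEdgeColoring G l) :
    HasTotalColoring (tensorProd G (cycleGraph n)) (k + l) := by
  let _ : LinearOrder V := WellOrderingRel.isWellOrder.linearOrder
  obtain ⟨cv, cA, hvv, hAA, hAv⟩ := hT
  obtain ⟨cB, hBB⟩ := hE
  refine ⟨fun x => Fin.castAdd l (cv x.1),
    Sym2.lift ⟨tensorCycleEdgeColor cA cB, tensorCycleEdgeColor_comm cA cB⟩, ?_, ?_, ?_⟩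
  · exact fun x y h => (Fin.castAdd_injective k l).ne (hvv _ _ h.1)
  · intro x y y' hy hy' hne
    simp only [Sym2.lift_mk, tensorCycleEdgeColor]
    split_ifs with h h' h'
    · refine (Fin.castAdd_injective k l).ne (hAA _ _ _ hy.1 hy'.1 fun hfst => hne ?_)
      exact eq_of_tensorProd_cycleGraph_adj hy hy' hfst (iff_of_true h h')
    · exact Fin.castAdd_ne_natAdd _ _
    · exact (Fin.castAdd_ne_natAdd _ _).symm
    · refine (Fin.natAdd_injective l k).ne (hBB _ _ _ hy.1 hy'.1 fun hfst => hne ?_)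
      exact eq_of_tensorProd_cycleGraph_adj hy hy' hfst (iff_of_false h h')
  · intro x y h
    simp only [Sym2.lift_mk, tensorCycleEdgeColor]
    split_ifs
    · exact ⟨(Fin.castAdd_injective k l).ne (hAv _ _ h.1).1,
        (Fin.castAdd_injective k l).ne (hAv _ _ h.1).2⟩
    · exact ⟨(Fin.castAdd_ne_natAdd _ _).symm, (Fin.castAdd_ne_natAdd _ _).symm⟩

/- For distinct residues `i, j` mod 3, `-(i + j)` is the third one. -/
theorem cycleGraph_six_hasTotalColoring : HasTotalColoring (cycleGraph 6) 3 :=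
  ⟨fun a => Fin.ofNat 3 a,
    Sym2.lift ⟨fun a b => -(Fin.ofNat 3 a + Fin.ofNat 3 b), fun _ _ => congrArg Neg.neg (add_comm _ _)⟩,
    by decide, by decide, by decide⟩

theorem cycleGraph_six_hasEdgeColoring : HasEdgeColoring (cycleGraph 6) 2 :=
  ⟨Sym2.lift ⟨fun a b =>
      if b = a + 1 then Fin.ofNat 2 a else if a = b + 1 then Fin.ofNat 2 b else 0, by decide⟩,
    by decide⟩

theorem c6_tensor_cn (n : ℕ) (hn : 3 ≤ n) :
    totalChromaticNumber (tensorProd (cycleGraph 6) (cycleGraph n)) = 5 := by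
  obtain ⟨m, rfl⟩ : ∃ m, n = m + 3 := ⟨n - 3, by omega⟩
  refine totalChromaticNumber_eq
    (cycleGraph_six_hasTotalColoring.tensorProd_cycleGraph cycleGraph_six_hasEdgeColoring)
    fun k hk => ?_
  have hdeg := hk.degree_lt (0, 0)
  rwa [tensorProd_degree, cycleGraph_degree_three_le, cycleGraph_degree_three_le] at hdeg
end
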